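/- arXiv:1602.05267 — 2 statements merged into one kernel-verified Lean document; each statement's English description precedes it below -/
import Mathlib

section
/- Let n ≥ 2, g ≥ 2 be integers and (k,l) a pair of integers with k(n−1) + l ≥ (n−1)g. Assume every vector bundle E of rank n and degree d on X has a line subbundle L with d − n·deg(L) ≤ (n−1)g (the Hirschowitz bound for m = 1). Then there exists no (k,l)-stable vector bundle of rank n and degree d on X. -/
/-- Abstract numerical data of vector bundles on a smooth projective curve:
each bundle has a positive rank and a degree, and `Sub F E` means that
`F` is a proper nonzero subbundle of `E`. -/
structure CurveBundles where
  Bundle : Type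
  rk : Bundle → ℕ
  deg : Bundle → ℤ
  Sub : Bundle → Bundle → Prop
  rk_pos : ∀ E, 0 < rk E
  sub_rk_lt : ∀ {F E}, Sub F E → rk F < rk E

namespace CurveBundles

/-- The generalised slope `μ_a(E) = (deg E + a)/rk E`. -/
def mu (S : CurveBundles) (a : ℤ) (E : S.Bundle) : ℚ :=
  ((S.deg E + a : ℤ) : ℚ) / (S.rk E : ℚ)

/-- `E` is `(k,l)`-stable: `μ_k(F) < μ_{k-l}(E)` for every proper nonzero subbundle `F`. -/
def KLStable (S : CurveBundles) (k l : ℤ) (E : S.Bundle) : Prop :=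
  ∀ F, S.Sub F E → S.mu k F < S.mu (k - l) E

/-- `E` is `(k,l)`-semistable. -/
def KLSemistable (S : CurveBundles) (k l : ℤ) (E : S.Bundle) : Prop :=
  ∀ F, S.Sub F E → S.mu k F ≤ S.mu (k - l) E

/-- `E` is stable. -/
def IsStable (S : CurveBundles) (E : S.Bundle) : Prop :=
  ∀ F, S.Sub F E → S.mu 0 F < S.mu 0 E

/-- `E` is semistable. -/
def IsSemistable (S : CurveBundles) (E : S.Bundle) : Prop :=
  ∀ F, S.Sub F E → S.mu 0 F ≤ S.mu 0 E

end CurveBundles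

namespace CurveBundles

variable (S : CurveBundles)

theorem mu_lt_mu_iff {a b : ℤ} {F E : S.Bundle} :
    S.mu a F < S.mu b E ↔ (S.deg F + a) * S.rk E < (S.deg E + b) * S.rk F := by
  unfold mu
  rw [div_lt_div_iff₀ (mod_cast S.rk_pos F) (mod_cast S.rk_pos E)]
  norm_cast

theorem mu_le_mu_of_rk_eq_one {k l : ℤ} {L E : S.Bundle} (hL : S.rk L = 1)
    (h : S.deg E - S.rk E * S.deg L ≤ k * (S.rk E - 1) + l) :
    S.mu (k - l) E ≤ S.mu k L := by
  rw [← not_lt, mu_lt_mu_iff, hL]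
  push_cast
  linarith

theorem not_klStable_of_rk_eq_one {k l : ℤ} {L E : S.Bundle} (hLE : S.Sub L E)
    (hL : S.rk L = 1) (h : S.deg E - S.rk E * S.deg L ≤ k * (S.rk E - 1) + l) :
    ¬ S.KLStable k l E := fun hE =>
  (S.mu_le_mu_of_rk_eq_one hL h).not_gt (hE L hLE)

end CurveBundles

theorem no_kl_stable_bundles_general (S : CurveBundles) (n : ℕ) (g d k l : ℤ)
    (hkl : ((n : ℤ) - 1) * g ≤ k * ((n : ℤ) - 1) + l)
    (hline : ∀ E, S.rk E = n → S.deg E = d →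
      ∃ L, S.Sub L E ∧ S.rk L = 1 ∧ d - (n : ℤ) * S.deg L ≤ ((n : ℤ) - 1) * g) :
    ∀ E, S.rk E = n → S.deg E = d → ¬ S.KLStable k l E := by
  intro E hrk hdeg
  obtain ⟨L, hLE, hL, hbound⟩ := hline E hrk hdeg
  refine S.not_klStable_of_rk_eq_one hLE hL ?_
  rw [hrk, hdeg]
  exact hbound.trans hkl

/-- If `k(n-1) + l ≥ (n-1)g` and every bundle of rank `n` and degree `d` has a line
subbundle `L` with `d - n·deg L ≤ (n-1)g` (Hirschowitz bound for `m = 1`), then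
there exists no `(k,l)`-stable bundle of rank `n` and degree `d`. -/
theorem no_kl_stable_bundles (S : CurveBundles) (n : ℕ) (g d k l : ℤ)
    (hn : 2 ≤ n) (hg : 2 ≤ g)
    (hkl : ((n : ℤ) - 1) * g ≤ k * ((n : ℤ) - 1) + l)
    (hline : ∀ E, S.rk E = n → S.deg E = d →
      ∃ L, S.Sub L E ∧ S.rk L = 1 ∧ d - (n : ℤ) * S.deg L ≤ ((n : ℤ) - 1) * g) :
    ∀ E, S.rk E = n → S.deg E = d → ¬ S.KLStable k l E :=
  no_kl_stable_bundles_general S n g d k l hkl hline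
end

section
/- Let E and F be (k,l)-stable vector bundles on a smooth projective curve X and let f : E → F be a nonzero morphism of vector bundles with image subbundle F₁ ⊂ F of rank r = rk(f) and quotient bundle E₁ of E (so E ↠ E₁ and rk E₁ = r, with a map E₁ → F₁ of degree deg E₁ ≤ deg F₁). Then μ_{k−l}(E) < μ_{k−l}(F) − (k+l)/r. -/
/-! The `(k,l)`-stability of `E`, applied to the kernel `K`, says by the mediant inequality that
the quotient `E₁ = E/K` has `μ_{k-l}(E) < μ_{-l}(E₁)`. Since `E₁` and the image `F₁` have the same
rank and `deg E₁ ≤ deg F₁`, this is at most `μ_{-l}(F₁) = μ_k(F₁) - (k+l)/r`, and the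
`(k,l)`-stability of `F`, applied to `F₁`, bounds `μ_k(F₁)` by `μ_{k-l}(F)`. -/

theorem add_div_add_lt_div_of_div_lt_add_div_add {α : Type*} [Field α] [LinearOrder α]
    [IsStrictOrderedRing α] {a b c d : α} (hb : 0 < b) (hd : 0 < d)
    (h : a / b < (a + c) / (b + d)) : (a + c) / (b + d) < c / d := by
  rw [div_lt_div_iff₀ hb (by positivity)] at h
  rw [div_lt_div_iff₀ (by positivity) hd]
  linarith

namespace CurveBundles

variable (S : CurveBundles)

theorem rk_pos_rat (E : S.Bundle) : (0 : ℚ) < S.rk E := by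
  exact_mod_cast S.rk_pos E

theorem mu_sub_mu (a b : ℤ) (E : S.Bundle) :
    S.mu a E - S.mu b E = ((a - b : ℤ) : ℚ) / S.rk E := by
  unfold mu
  push_cast
  ring

variable {S}

theorem mu_le_mu_of_deg_le (a : ℤ) {E F : S.Bundle} (hrk : S.rk E = S.rk F)
    (hdeg : S.deg E ≤ S.deg F) : S.mu a E ≤ S.mu a F := by
  unfold mu
  rw [hrk]
  gcongr

theorem KLStable.mu_lt_mu_of_quotient {k l : ℤ} {E K Q : S.Bundle} (hE : S.KLStable k l E)
    (hK : S.Sub K E) (hrk : (S.rk Q : ℤ) = S.rk E - S.rk K)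
    (hdeg : S.deg Q = S.deg E - S.deg K) : S.mu (k - l) E < S.mu (-l) Q := by
  have hrkE : (S.rk E : ℚ) = S.rk K + S.rk Q := by
    have : (S.rk E : ℤ) = S.rk K + S.rk Q := by omega
    exact_mod_cast this
  have hdegE : ((S.deg E + (k - l) : ℤ) : ℚ) = (S.deg K + k : ℤ) + (S.deg Q + -l : ℤ) := by
    push_cast [hdeg]
    ring
  -- `μ_{k-l}(E)` is the mediant of `μ_k(K)` and `μ_{-l}(Q)`.
  have hsub := hE K hK
  unfold mu at hsub ⊢
  rw [hrkE, hdegE] at hsub ⊢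
  exact add_div_add_lt_div_of_div_lt_add_div_add (S.rk_pos_rat K) (S.rk_pos_rat Q) hsub

end CurveBundles

theorem mu_lt_of_hom_general (S : CurveBundles) (k l : ℤ) (r : ℕ)
    (E F E₁ F₁ K : S.Bundle)
    (hE : S.KLStable k l E) (hF : S.KLStable k l F)
    (hK : S.Sub K E)
    (hrkE₁ : (S.rk E₁ : ℤ) = (S.rk E : ℤ) - (S.rk K : ℤ))
    (hdegE₁ : S.deg E₁ = S.deg E - S.deg K)
    (hF₁ : S.Sub F₁ F)
    (hrE₁ : S.rk E₁ = r) (hrF₁ : S.rk F₁ = r)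
    (hdeg : S.deg E₁ ≤ S.deg F₁) :
    S.mu (k - l) E < S.mu (k - l) F - ((k + l : ℤ) : ℚ) / (r : ℚ) := by
  have hshift : S.mu (-l) F₁ = S.mu k F₁ - ((k + l : ℤ) : ℚ) / (r : ℚ) := by
    rw [← hrF₁, show k + l = k - -l by ring, ← S.mu_sub_mu, sub_sub_cancel]
  calc S.mu (k - l) E < S.mu (-l) E₁ := hE.mu_lt_mu_of_quotient hK hrkE₁ hdegE₁
    _ ≤ S.mu (-l) F₁ := CurveBundles.mu_le_mu_of_deg_le _ (hrE₁.trans hrF₁.symm) hdeg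
    _ = S.mu k F₁ - ((k + l : ℤ) : ℚ) / (r : ℚ) := hshift
    _ < S.mu (k - l) F - ((k + l : ℤ) : ℚ) / (r : ℚ) := by gcongr; exact hF F₁ hF₁

/-- If `f : E → F` is a nonzero non-isomorphism between `(k,l)`-stable bundles, with
image subbundle `F₁ ⊂ F` of rank `r = rk f` and corresponding proper quotient `E₁` of
`E` (realised as `E/K` for a proper subbundle `K ⊂ E`) of rank `r` with
`deg E₁ ≤ deg F₁`, then `μ_{k-l}(E) < μ_{k-l}(F) - (k+l)/r`. -/
theorem mu_lt_of_hom (S : CurveBundles) (k l : ℤ) (r : ℕ) (hr : 0 < r)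
    (E F E₁ F₁ K : S.Bundle)
    (hE : S.KLStable k l E) (hF : S.KLStable k l F)
    (hK : S.Sub K E)
    (hrkE₁ : (S.rk E₁ : ℤ) = (S.rk E : ℤ) - (S.rk K : ℤ))
    (hdegE₁ : S.deg E₁ = S.deg E - S.deg K)
    (hF₁ : S.Sub F₁ F)
    (hrE₁ : S.rk E₁ = r) (hrF₁ : S.rk F₁ = r)
    (hdeg : S.deg E₁ ≤ S.deg F₁) :
    S.mu (k - l) E < S.mu (k - l) F - ((k + l : ℤ) : ℚ) / (r : ℚ) :=
  mu_lt_of_hom_general S k l r E F E₁ F₁ K hE hF hK hrkE₁ hdegE₁ hF₁ hrE₁ hrF₁ hdeg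
end
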